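/- arXiv:math/0304258 — 2 statements merged into one kernel-verified Lean document; each statement's English description precedes it below -/
import Mathlib

section
/- For a symmetric 2-design (v, k, λ) with v even, k − λ is a perfect square. -/
open Finset Matrix

/-- Bruck–Ryser–Chowla, easy half: in a symmetric 2-design `(v, k, λ)` with `v` even,
`k - λ` is a perfect square. -/
theorem stmt_2 (A B : Type) [Fintype A] [Fintype B] [DecidableEq A]
    (R : A → B → Prop) [∀ a b, Decidable (R a b)]
    (v k lam : ℕ)
    (hv : Fintype.card A = v) (hb : Fintype.card B = v)
    (hk : ∀ a : A, (Finset.univ.filter (fun y : B => R a y)).card = k)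
    (hk' : ∀ y : B, (Finset.univ.filter (fun a : A => R a y)).card = k)
    (hlam : ∀ x y : A, x ≠ y →
      (Finset.univ.filter (fun z : B => R x z ∧ R y z)).card = lam)
    (hk2 : 2 ≤ k) (hkv : k < v) (hv2 : Even v) :
    ∃ m : ℤ, (k : ℤ) - lam = m ^ 2 := by
  classical
  have hv3 : 3 ≤ v := lt_of_le_of_lt hk2 hkv
  have hA : Nonempty A := by
    rw [← Fintype.card_pos_iff, hv]; omega
  obtain ⟨x0⟩ := hA
  -- counting: lam * (v-1) = k * (k-1)
  have hcount : lam * (v - 1) = k * (k - 1) := by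
    have h1 : ∑ y ∈ univ.erase x0, (univ.filter (fun z : B => R x0 z ∧ R y z)).card
        = lam * (v - 1) := by
      rw [Finset.sum_congr rfl (fun y hy => hlam x0 y (Finset.ne_of_mem_erase hy).symm),
        Finset.sum_const, Finset.card_erase_of_mem (Finset.mem_univ x0), Finset.card_univ, hv]
      ring
    have h2 : ∑ y ∈ univ.erase x0, (univ.filter (fun z : B => R x0 z ∧ R y z)).card
        = k * (k - 1) := by
      have : ∀ y : A, (univ.filter (fun z : B => R x0 z ∧ R y z)).card
          = ∑ z : B, if R x0 z ∧ R y z then 1 else 0 := by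
        intro y; rw [Finset.card_filter]
      rw [Finset.sum_congr rfl (fun y _ => this y), Finset.sum_comm]
      have h3 : ∀ z : B, (∑ y ∈ univ.erase x0, if R x0 z ∧ R y z then 1 else 0)
          = if R x0 z then k - 1 else 0 := by
        intro z
        by_cases hz : R x0 z
        · simp only [hz, true_and, if_pos]
          have : (∑ y ∈ univ.erase x0, if R y z then 1 else 0)
              = ((univ.erase x0).filter (fun y => R y z)).card := (Finset.card_filter _ _).symm
          rw [this, Finset.filter_erase, Finset.card_erase_of_mem
              (by simpa using hz), hk' z]
        · simp [hz]
      rw [Finset.sum_congr rfl (fun z _ => h3 z)]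
      have h4 : (∑ z : B, if R x0 z then k - 1 else 0)
          = (univ.filter (fun z : B => R x0 z)).card * (k - 1) := by
        rw [← Finset.sum_filter, Finset.sum_const, smul_eq_mul]
      rw [h4, hk x0]
    omega
  have hcZ : (lam : ℤ) * (v - 1) = k * (k - 1) := by
    have := hcount
    zify [show 1 ≤ v by omega, show 1 ≤ k by omega] at this
    exact this
  have hlamk : lam < k := by
    by_contra h
    push_neg at h
    have : (k : ℤ) * (v - 1) ≤ lam * (v - 1) := by
      apply mul_le_mul_of_nonneg_right (by exact_mod_cast h)
      omega
    rw [hcZ] at this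
    have : (k : ℤ) * (v - 1) ≤ k * (k - 1) := this
    have hk0 : (0 : ℤ) < k := by exact_mod_cast (by omega : 0 < k)
    nlinarith [show (k : ℤ) < v by exact_mod_cast hkv]
  -- set up incidence matrix
  have hcard : Fintype.card A = Fintype.card B := hv.trans hb.symm
  let e : A ≃ B := Fintype.equivOfCardEq hcard
  set N : Matrix A A ℤ := Matrix.of (fun i j => if R i (e j) then 1 else 0) with hN
  have key : ∀ x y : A, (N * Nᵀ) x y = ((univ.filter (fun z : B => R x z ∧ R y z)).card : ℤ) := by
    intro x y
    rw [Matrix.mul_apply]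
    have h1 : ∀ j : A, N x j * Nᵀ j y
        = (if R x (e j) ∧ R y (e j) then (1:ℤ) else 0) := by
      intro j
      simp only [hN, Matrix.transpose_apply, Matrix.of_apply]
      by_cases h1 : R x (e j) <;> by_cases h2 : R y (e j) <;> simp [h1, h2]
    rw [Finset.sum_congr rfl (fun j _ => h1 j),
      Fintype.sum_equiv e (fun j : A => if R x (e j) ∧ R y (e j) then (1:ℤ) else 0)
        (fun z : B => if R x z ∧ R y z then (1:ℤ) else 0) (fun j => rfl),
      Finset.sum_boole]
  -- pass to ℚ and compute the determinant
  set c : ℚ := (k : ℚ) - lam with hc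
  have hc0 : c ≠ 0 := by
    have : (lam : ℚ) < k := by exact_mod_cast hlamk
    rw [hc]; intro h; linarith
  have hmapdet : ((N * Nᵀ).det : ℚ) = ((N * Nᵀ).map (Int.cast : ℤ → ℚ)).det :=
    RingHom.map_det (Int.castRingHom ℚ) _
  have hmapM : (N * Nᵀ).map (Int.cast : ℤ → ℚ)
      = c • ((1 : Matrix A A ℚ) + Matrix.replicateCol Unit (fun _ => (lam : ℚ) / c)
          * Matrix.replicateRow Unit (fun _ => (1:ℚ))) := by
    ext x y
    rw [Matrix.map_apply, key x y]
    have hcr : (Matrix.replicateCol Unit (fun _ : A => (lam : ℚ) / c)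
        * Matrix.replicateRow Unit (fun _ : A => (1:ℚ))) x y = (lam : ℚ) / c := by
      simp [Matrix.mul_apply]
    by_cases hxy : x = y
    · subst hxy
      have hfk : (univ.filter (fun z : B => R x z ∧ R x z)).card = k := by
        simpa using hk x
      rw [hfk]
      simp only [Matrix.smul_apply, Matrix.add_apply, Matrix.one_apply_eq, hcr,
        smul_eq_mul]
      rw [mul_add, mul_one, mul_div_cancel₀ _ hc0, hc]
      push_cast
      ring
    · rw [hlam x y hxy]
      simp only [Matrix.smul_apply, Matrix.add_apply, Matrix.one_apply_ne hxy, hcr,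
        smul_eq_mul]
      rw [zero_add, mul_div_cancel₀ _ hc0]
      push_cast
      ring
  have hdet : ((N * Nᵀ).det : ℚ) = c ^ (v - 1) * (k : ℚ) ^ 2 := by
    rw [hmapdet, hmapM, Matrix.det_smul, Matrix.det_one_add_replicateCol_mul_replicateRow]
    have hdot : (fun _ : A => (1:ℚ)) ⬝ᵥ (fun _ : A => (lam : ℚ) / c)
        = (v : ℚ) * ((lam : ℚ) / c) := by
      simp [dotProduct, Finset.card_univ, hv]
    rw [hdot, hv]
    have hvs : v = (v - 1) + 1 := by omega
    have hck : c + (v : ℚ) * lam = (k : ℚ) ^ 2 := by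
      have : (lam : ℚ) * ((v : ℚ) - 1) = (k : ℚ) * ((k : ℚ) - 1) := by
        exact_mod_cast hcZ
      rw [hc]; nlinarith [this]
    calc c ^ v * (1 + (v : ℚ) * ((lam:ℚ) / c))
        = c ^ ((v-1)+1) * (1 + (v : ℚ) * ((lam:ℚ) / c)) := by rw [← hvs]
      _ = c ^ (v-1) * (c * (1 + (v : ℚ) * ((lam:ℚ) / c))) := by ring
      _ = c ^ (v-1) * (c + (v : ℚ) * lam) := by
          rw [mul_add, mul_one, ← mul_assoc, mul_comm c ((v:ℚ)), mul_assoc,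
            mul_div_cancel₀ _ hc0]
      _ = c ^ (v-1) * (k : ℚ) ^ 2 := by rw [hck]
  -- back to ℤ
  set a : ℤ := (k : ℤ) - lam with ha
  have ha0 : 0 < a := by
    have : (lam : ℤ) < k := by exact_mod_cast hlamk
    omega
  have hdetZ : (N.det) ^ 2 = a ^ (v - 1) * (k : ℤ) ^ 2 := by
    have h1 : (N * Nᵀ).det = N.det ^ 2 := by
      rw [Matrix.det_mul, Matrix.det_transpose, sq]
    have h2 : (((N * Nᵀ).det : ℤ) : ℚ) = ((a ^ (v-1) * (k:ℤ)^2 : ℤ) : ℚ) := by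
      rw [hdet, hc, ha]
      push_cast
      ring
    rw [← h1]
    exact_mod_cast h2
  -- extract the square
  obtain ⟨t, ht⟩ : ∃ t, v = 2 * t + 2 := by
    obtain ⟨s, hs⟩ := hv2
    exact ⟨s - 1, by omega⟩
  have hv1 : v - 1 = 2 * t + 1 := by omega
  set b : ℤ := a ^ t * k with hbdef
  have hb0 : b ≠ 0 := by
    apply mul_ne_zero (pow_ne_zero _ (by omega))
    exact_mod_cast (by omega : k ≠ 0)
  have hdvd : b ∣ N.det := by
    rw [← Int.pow_dvd_pow_iff (two_ne_zero)]
    rw [hdetZ, hv1, hbdef]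
    exact ⟨a, by ring⟩
  obtain ⟨m, hm⟩ := hdvd
  refine ⟨m, ?_⟩
  have : b ^ 2 * a = b ^ 2 * m ^ 2 := by
    calc b ^ 2 * a = a ^ (v-1) * (k:ℤ)^2 := by rw [hv1, hbdef]; ring
      _ = N.det ^ 2 := hdetZ.symm
      _ = b ^ 2 * m ^ 2 := by rw [hm]; ring
  have := mul_left_cancel₀ (pow_ne_zero 2 hb0) this
  exact this
end

section
/- The order n of a Hadamard matrix with n ≥ 3 is divisible by 4. -/
/-- The order `n ≥ 3` of a Hadamard matrix is divisible by `4`. -/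
theorem stmt_10 (n : ℕ) (hn : 3 ≤ n) (A : Matrix (Fin n) (Fin n) ℤ)
    (hent : ∀ i j, A i j = 1 ∨ A i j = -1)
    (horth : A * A.transpose = (n : ℤ) • (1 : Matrix (Fin n) (Fin n) ℤ)) :
    4 ∣ n := by
  set i0 : Fin n := ⟨0, by omega⟩ with hi0
  set i1 : Fin n := ⟨1, by omega⟩ with hi1
  set i2 : Fin n := ⟨2, by omega⟩ with hi2
  have key : ∀ i k : Fin n, ∑ j, A i j * A k j = if i = k then (n : ℤ) else 0 := by
    intro i k
    have h := congrFun (congrFun horth i) k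
    simp only [Matrix.mul_apply, Matrix.transpose_apply, Matrix.smul_apply,
      Matrix.one_apply, smul_eq_mul, mul_ite, mul_one, mul_zero] at h
    exact h
  have ne01 : i0 ≠ i1 := by simp [hi0, hi1, Fin.ext_iff]
  have ne02 : i0 ≠ i2 := by simp [hi0, hi2, Fin.ext_iff]
  have ne12 : i1 ≠ i2 := by simp [hi1, hi2, Fin.ext_iff]
  have e00 := key i0 i0
  have e02 := key i0 i2
  have e10 := key i1 i0
  have e12 := key i1 i2
  rw [if_pos rfl] at e00
  rw [if_neg ne02] at e02
  rw [if_neg ne01.symm] at e10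
  rw [if_neg ne12] at e12
  have hsum : ∑ j, (A i0 j + A i1 j) * (A i0 j + A i2 j) = (n : ℤ) := by
    have hexp : ∀ j, (A i0 j + A i1 j) * (A i0 j + A i2 j)
        = A i0 j * A i0 j + A i0 j * A i2 j + (A i1 j * A i0 j + A i1 j * A i2 j) := by
      intro j; ring
    rw [Finset.sum_congr rfl fun j _ => hexp j, Finset.sum_add_distrib,
      Finset.sum_add_distrib, Finset.sum_add_distrib, e00, e02, e10, e12]
    ring
  have hdvd : (4 : ℤ) ∣ ∑ j, (A i0 j + A i1 j) * (A i0 j + A i2 j) :=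
    Finset.dvd_sum fun j _ => by
      rcases hent i0 j with h0 | h0 <;> rcases hent i1 j with h1 | h1 <;>
        rcases hent i2 j with h2 | h2 <;> rw [h0, h1, h2] <;> norm_num
  rw [hsum] at hdvd
  exact_mod_cast hdvd
end
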